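/- arXiv:2308.02444 — 5 statements merged into one kernel-verified Lean document; each statement's English description precedes it below -/
import Mathlib

section
/- There exists an effectively computable positive real number c₁ such that the following holds. Let y be a non-decreasing function from the positive real numbers to the real numbers with y(x) ≥ 3 for all x > 0, and let n_1 < n_2 < n_3 < ... be the increasing sequence of all positive integers n with P(n) ≤ y(n). Then there are infinitely many positive integers i for which n_{i+1} − n_i < n_i · exp(c₁·y(n_i)) / (log n_i)^{r−1}, where r = π(y(√(n_i))). -/
/-!
Fix a dyadic block `[2^k, 2^(k+1))`, and put `T = y(2^k)` and `r = π(T)`. For `m` in the block,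
`log m ≤ 2 k log 2` and `π(y(√m)) ≤ r`, so the bound in the theorem is at least `X = 2^k e^(33 T) / (2 k log 2)^(r-1)`, so it suffices to find a
gap below `X` between consecutive members of the block. If every such gap were at least `X`, the
block would hold at most `1 + 2^k / X` members. But it holds the `(B+1)^(r-1)` distinct `T`-smooth
numbers `2^j ∏ p^(v p)`, with `p` running over the odd primes up to `T`, `v p ≤ B`, and `j`
chosen to land in the block; taking `B = ⌊k log 2 / ((r-1) log T)⌋` and using Chebyshev's bound
`(r-1) log T ≤ 8 T`, these are too many. When `B = 0`, the member `2^k` does the job instead, since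
`2^(k+1)` is also smooth. Blocks with `2^k > n_N` give `i ≥ N`.
-/

open Real Filter

/-- Greatest prime factor of `n`, with the convention `P 0 = P 1 = 1`. -/
def maxPrimeFactor (n : ℕ) : ℕ := max 1 (n.primeFactors.sup id)

/-- Prime counting function `π` for a real argument: the number of primes `p ≤ x`. -/
noncomputable def primePi (x : ℝ) : ℕ := Nat.primeCounting ⌊x⌋₊

open Finset

lemma le_maxPrimeFactor {m p : ℕ} (h : p ∈ m.primeFactors) : p ≤ maxPrimeFactor m :=
  (Finset.le_sup (f := id) h).trans (le_max_right _ _)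

lemma one_le_maxPrimeFactor (m : ℕ) : 1 ≤ maxPrimeFactor m :=
  le_max_left _ _

lemma maxPrimeFactor_le_iff {m t : ℕ} (ht : 1 ≤ t) :
    maxPrimeFactor m ≤ t ↔ ∀ p ∈ m.primeFactors, p ≤ t := by
  simp [maxPrimeFactor, ht]

lemma maxPrimeFactor_mul_le (a b : ℕ) :
    maxPrimeFactor (a * b) ≤ max (maxPrimeFactor a) (maxPrimeFactor b) := by
  rcases eq_or_ne a 0 with rfl | ha
  · simp [maxPrimeFactor]
  rcases eq_or_ne b 0 with rfl | hb
  · simp [maxPrimeFactor]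
  rw [maxPrimeFactor_le_iff (le_max_of_le_left (one_le_maxPrimeFactor a)),
    Nat.primeFactors_mul ha hb]
  intro p hp
  rcases Finset.mem_union.1 hp with h | h
  · exact le_max_of_le_left (le_maxPrimeFactor h)
  · exact le_max_of_le_right (le_maxPrimeFactor h)

lemma maxPrimeFactor_two_pow_le (a : ℕ) : maxPrimeFactor (2 ^ a) ≤ 2 :=
  (maxPrimeFactor_le_iff one_le_two).2 fun _ hp =>
    Nat.le_of_dvd two_pos <|
      (Nat.prime_of_mem_primeFactors hp).dvd_of_dvd_pow (Nat.dvd_of_mem_primeFactors hp)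

def smoothSet (y : ℝ → ℝ) : Set ℕ := {m | 0 < m ∧ (maxPrimeFactor m : ℝ) ≤ y m}

section SmoothSet

variable {y : ℝ → ℝ}

lemma mem_smoothSet_of_le (hy : MonotoneOn y (Set.Ioi 0)) {x : ℝ} {m : ℕ} (hx : 0 < x)
    (hxm : x ≤ m) (hP : (maxPrimeFactor m : ℝ) ≤ y x) : m ∈ smoothSet y :=
  ⟨by exact_mod_cast hx.trans_le hxm, hP.trans (hy hx (hx.trans_le hxm) hxm)⟩

lemma two_pow_mem_smoothSet (hy3 : ∀ x : ℝ, 0 < x → 3 ≤ y x) (a : ℕ) : 2 ^ a ∈ smoothSet y :=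
  ⟨by positivity, by
    have h2 : (maxPrimeFactor (2 ^ a) : ℝ) ≤ 2 := by exact_mod_cast maxPrimeFactor_two_pow_le a
    linarith [hy3 (2 ^ a : ℕ) (by positivity)]⟩

lemma two_mul_mem_smoothSet (hy : MonotoneOn y (Set.Ioi 0)) (hy3 : ∀ x : ℝ, 0 < x → 3 ≤ y x)
    {m : ℕ} (hm : m ∈ smoothSet y) : 2 * m ∈ smoothSet y := by
  have hm0 : (0 : ℝ) < m := by exact_mod_cast hm.1
  refine mem_smoothSet_of_le hy hm0 (by push_cast; linarith) ?_
  have h2 : (maxPrimeFactor 2 : ℝ) ≤ y m := by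
    have : (maxPrimeFactor 2 : ℝ) ≤ 2 := by exact_mod_cast maxPrimeFactor_two_pow_le 1
    linarith [hy3 m hm0]
  calc (maxPrimeFactor (2 * m) : ℝ) ≤ max (maxPrimeFactor 2 : ℝ) (maxPrimeFactor m) := by
        exact_mod_cast maxPrimeFactor_mul_le 2 m
    _ ≤ y m := max_le h2 hm.2

end SmoothSet

section Enumeration

variable {S : Set ℕ} {n : ℕ → ℕ}

lemma succ_le_of_mem_of_lt (hn : StrictMonoOn n (Set.Ici 1))
    (hsurj : ∀ m ∈ S, ∃ i, 1 ≤ i ∧ n i = m) {i m : ℕ} (hi : 1 ≤ i) (hm : m ∈ S)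
    (hlt : n i < m) : n (i + 1) ≤ m := by
  obtain ⟨j, hj, rfl⟩ := hsurj m hm
  have hij : i < j := (hn.lt_iff_lt hi hj).1 hlt
  exact (hn.le_iff_le (Set.mem_Ici.2 (by omega)) hj).2 hij

lemma add_mul_le_of_forall_le_sub {X : ℝ} {i : ℕ} (d : ℕ)
    (hgap : ∀ l, i ≤ l → l < i + d → X ≤ (n (l + 1) : ℝ) - n l) :
    (n i : ℝ) + d * X ≤ n (i + d) := by
  induction d with
  | zero => simp
  | succ d ih =>
    have h₁ := ih fun l hl hld => hgap l hl (by omega)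
    have h₂ := hgap (i + d) le_self_add (by omega)
    push_cast
    rw [← add_assoc]
    linarith

lemma exists_gap_lt_of_card_mul_ge (hn : StrictMonoOn n (Set.Ici 1))
    (hsurj : ∀ m ∈ S, ∃ i, 1 ≤ i ∧ n i = m) {A : Finset ℕ} {a b : ℕ} {X : ℝ}
    (hA_ne : A.Nonempty) (hAS : ∀ m ∈ A, m ∈ S) (hA : A ⊆ Ico a b) (hX : 0 ≤ X)
    (hcard : (b : ℝ) - a ≤ (#A - 1) * X) :
    ∃ i, 1 ≤ i ∧ n i ∈ Ico a b ∧ (n (i + 1) : ℝ) - n i < X := by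
  by_contra! hgap
  choose! ι hι hnι using fun m hm => hsurj m (hAS m hm)
  obtain ⟨m₁, hm₁, hmin⟩ := A.exists_min_image id hA_ne
  obtain ⟨m₂, hm₂, hmax⟩ := A.exists_max_image id hA_ne
  have hle : ∀ m ∈ A, ι m₁ ≤ ι m ∧ ι m ≤ ι m₂ := fun m hm =>
    ⟨(hn.le_iff_le (hι _ hm₁) (hι m hm)).1 (by rw [hnι _ hm₁, hnι m hm]; exact hmin m hm),
     (hn.le_iff_le (hι m hm) (hι _ hm₂)).1 (by rw [hnι _ hm₂, hnι m hm]; exact hmax m hm)⟩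
  have hι₁₂ : ι m₁ ≤ ι m₂ := (hle _ hm₁).2
  have hcard_le : #A ≤ ι m₂ - ι m₁ + 1 := by
    have := Finset.card_le_card_of_injOn ι (fun m hm => Finset.mem_Icc.2 (hle m hm))
      fun m hm m' hm' h => by rw [← hnι m hm, ← hnι m' hm', h]
    rw [Nat.card_Icc] at this
    omega
  have hspread := add_mul_le_of_forall_le_sub (n := n) (X := X) (ι m₂ - ι m₁) fun l hl hl₂ => by
    have hl1 : 1 ≤ l := (hι _ hm₁).trans hl
    refine hgap l hl1 (Finset.mem_Ico.2 ⟨?_, ?_⟩)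
    · calc a ≤ m₁ := (Finset.mem_Ico.1 (hA hm₁)).1
        _ = n (ι m₁) := (hnι _ hm₁).symm
        _ ≤ n l := (hn.le_iff_le (hι _ hm₁) hl1).2 hl
    · calc n l ≤ n (ι m₂) := (hn.le_iff_le hl1 (hι _ hm₂)).2 (by omega)
        _ = m₂ := hnι _ hm₂
        _ < b := (Finset.mem_Ico.1 (hA hm₂)).2
  rw [Nat.add_sub_of_le hι₁₂, hnι _ hm₁, hnι _ hm₂] at hspread
  have ha : (a : ℝ) ≤ m₁ := by exact_mod_cast (Finset.mem_Ico.1 (hA hm₁)).1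
  have hb : (m₂ : ℝ) < b := by exact_mod_cast (Finset.mem_Ico.1 (hA hm₂)).2
  have hd : (#A : ℝ) - 1 ≤ (ι m₂ - ι m₁ : ℕ) := by
    have : (#A : ℝ) ≤ (ι m₂ - ι m₁ : ℕ) + 1 := by exact_mod_cast hcard_le
    linarith
  nlinarith [mul_le_mul_of_nonneg_right hd hX]

end Enumeration

lemma two_pow_sub_log_mul_mem_Ico {s k : ℕ} (hs₀ : s ≠ 0) (hs : s ≤ 2 ^ k) :
    2 ^ (k - Nat.log 2 s) * s ∈ Finset.Ico (2 ^ k) (2 ^ (k + 1)) := by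
  set l := Nat.log 2 s
  have hl : 2 ^ l ≤ s := Nat.pow_log_le_self 2 hs₀
  have hl' : s < 2 ^ (l + 1) := Nat.lt_pow_succ_log_self one_lt_two s
  have hlk : l ≤ k := (Nat.pow_le_pow_iff_right one_lt_two).1 (hl.trans hs)
  rw [Finset.mem_Ico]
  constructor
  · calc 2 ^ k = 2 ^ (k - l) * 2 ^ l := by rw [← pow_add, Nat.sub_add_cancel hlk]
      _ ≤ 2 ^ (k - l) * s := Nat.mul_le_mul_left _ hl
  · calc 2 ^ (k - l) * s < 2 ^ (k - l) * 2 ^ (l + 1) :=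
          Nat.mul_lt_mul_of_pos_left hl' (by positivity)
      _ = 2 ^ (k + 1) := by rw [← pow_add]; congr 1; omega

lemma factorization_two_pow_mul_prod_pow {Q : Finset ℕ} (hQ : ∀ p ∈ Q, p.Prime) (h2 : 2 ∉ Q)
    (j : ℕ) (e : Q → ℕ) (q : Q) :
    (2 ^ j * ∏ p : Q, (p : ℕ) ^ e p).factorization q = e q := by
  have hq2 : (q : ℕ) ≠ 2 := fun h => h2 (h ▸ q.2)
  have hpow (p : Q) : (p : ℕ) ^ e p ≠ 0 := pow_ne_zero _ (hQ p p.2).ne_zero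
  rw [Nat.factorization_mul (by positivity) (Finset.prod_ne_zero_iff.2 fun p _ => hpow p),
    Nat.factorization_prod fun p _ => hpow p]
  simp only [Finsupp.add_apply, Finsupp.coe_finsetSum, Finset.sum_apply,
    Nat.Prime.factorization_pow Nat.prime_two, Finsupp.single_apply]
  rw [if_neg (Ne.symm hq2), zero_add, Finset.sum_eq_single q]
  · simp [(hQ q q.2).factorization_pow]
  · intro c _ hc
    rw [(hQ c c.2).factorization_pow, Finsupp.single_apply, if_neg (Subtype.coe_ne_coe.2 hc)]
  · simp

lemma card_smooth_Ico_two_pow_ge {t B k : ℕ} (ht : 2 ≤ t)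
    (h : t ^ (B * (Nat.primeCounting t - 1)) ≤ 2 ^ k) :
    (B + 1) ^ (Nat.primeCounting t - 1) ≤
      #{m ∈ Finset.Ico (2 ^ k) (2 ^ (k + 1)) | maxPrimeFactor m ≤ t} := by
  classical
  set Q := (Nat.primesLE t).erase 2
  have hQ : ∀ p ∈ Q, p.Prime := fun p hp => Nat.prime_of_mem_primesLE (Finset.mem_of_mem_erase hp)
  have hQt : ∀ p ∈ Q, p ≤ t := fun p hp => Nat.le_of_mem_primesLE (Finset.mem_of_mem_erase hp)
  have hQcard : #Q = Nat.primeCounting t - 1 := by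
    rw [Finset.card_erase_of_mem (Nat.mem_primesLE.2 ⟨ht, Nat.prime_two⟩),
      Nat.primesLE_card_eq_primeCounting]
  set σ : (Q → Fin (B + 1)) → ℕ := fun v => ∏ p : Q, (p : ℕ) ^ (v p : ℕ)
  have hσ₀ (v) : σ v ≠ 0 := Finset.prod_ne_zero_iff.2 fun p _ => pow_ne_zero _ (hQ p p.2).ne_zero
  have hσ_le (v) : σ v ≤ 2 ^ k := calc
    σ v ≤ ∏ _p : Q, t ^ B := Finset.prod_le_prod' fun p _ =>
          pow_le_pow (hQt p p.2) (by omega) (Nat.lt_succ_iff.1 (v p).2)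
    _ = t ^ (B * #Q) := by rw [Finset.prod_const, ← pow_mul, Finset.card_univ, Fintype.card_coe]
    _ ≤ 2 ^ k := hQcard ▸ h
  have hσ_smooth (v) : maxPrimeFactor (σ v) ≤ t := by
    refine (maxPrimeFactor_le_iff (by omega)).2 fun q hq => ?_
    obtain ⟨p, -, hqp⟩ := (Nat.prime_of_mem_primeFactors hq).prime.exists_mem_finset_dvd
      (Nat.dvd_of_mem_primeFactors hq)
    have := (Nat.prime_dvd_prime_iff_eq (Nat.prime_of_mem_primeFactors hq) (hQ p p.2)).1
      ((Nat.prime_of_mem_primeFactors hq).dvd_of_dvd_pow hqp)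
    exact this ▸ hQt p p.2
  calc (B + 1) ^ (Nat.primeCounting t - 1) = #(Finset.univ : Finset (Q → Fin (B + 1))) := by
        rw [Finset.card_univ, Fintype.card_fun, Fintype.card_fin, Fintype.card_coe, hQcard]
    _ ≤ _ := by
      refine Finset.card_le_card_of_injOn (fun v => 2 ^ (k - Nat.log 2 (σ v)) * σ v)
        (fun v _ => Finset.mem_filter.2 ⟨two_pow_sub_log_mul_mem_Ico (hσ₀ v) (hσ_le v), ?_⟩) ?_
      · exact (maxPrimeFactor_mul_le _ _).trans
          (max_le ((maxPrimeFactor_two_pow_le _).trans ht) (hσ_smooth v))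
      · intro v _ w _ hvw
        funext q
        have := congrArg (fun m => m.factorization q) hvw
        simp only [σ, factorization_two_pow_mul_prod_pow hQ (Finset.notMem_erase 2 _)] at this
        exact Fin.ext this

lemma primeCounting_floor_mul_log_le {x : ℝ} (hx : 1 < x) :
    (Nat.primeCounting ⌊x⌋₊ : ℝ) * log x ≤ 8 * x := by
  have hπ := Chebyshev.pi_le_log4_mul_div hx
  have hs : 0 < log √x := log_pos (lt_sqrt_of_sq_lt (by simp [hx]))
  have hlogx : log x = 2 * log √x := by rw [log_sqrt (by linarith)]; ring
  have hlog4 : log 4 ≤ 3 := by linarith [log_le_sub_one_of_pos (show (0 : ℝ) < 4 by norm_num)]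
  have hlogs : log √x ≤ √x := by linarith [log_le_sub_one_of_pos (sqrt_pos.2 (by linarith : 0 < x))]
  have hsq : √x * √x = x := mul_self_sqrt (by linarith)
  calc (Nat.primeCounting ⌊x⌋₊ : ℝ) * log x
      ≤ (log 4 * x / log √x + √x) * (2 * log √x) := by
        rw [hlogx]; exact mul_le_mul_of_nonneg_right hπ (by positivity)
    _ = 2 * log 4 * x + 2 * √x * log √x := by field_simp
    _ ≤ 8 * x := by nlinarith [sqrt_nonneg x]

lemma one_le_primePi_sub_one {T : ℝ} (hT : 3 ≤ T) : 1 ≤ primePi T - 1 := by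
  have : Nat.primeCounting 3 ≤ primePi T :=
    Nat.monotone_primeCounting (Nat.le_floor (by exact_mod_cast hT))
  rw [show Nat.primeCounting 3 = 2 by decide] at this
  omega

lemma primePi_sub_one_mul_log_le {T : ℝ} (hT : 1 < T) :
    ((primePi T - 1 : ℕ) : ℝ) * log T ≤ 8 * T := calc
  ((primePi T - 1 : ℕ) : ℝ) * log T ≤ primePi T * log T :=
      mul_le_mul_of_nonneg_right (by exact_mod_cast Nat.sub_le _ _) (log_nonneg hT.le)
  _ ≤ 8 * T := primeCounting_floor_mul_log_le hT

lemma pow_le_exp_of_mul_log_le {T : ℝ} {L : ℕ} (hT : 3 ≤ T) (h : L * log T ≤ 8 * T) :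
    (16 * T) ^ L ≤ exp (32 * T) := calc
  (16 * T) ^ L ≤ (T ^ 4) ^ L :=
      pow_le_pow_left₀ (by positivity) (by nlinarith [pow_le_pow_left₀ (by norm_num) hT 3]) L
  _ = exp (4 * (L * log T)) := by
      rw [← pow_mul, ← exp_log (by positivity : 0 < T), ← exp_nat_mul, log_exp]; push_cast; ring_nf
  _ ≤ exp (32 * T) := exp_le_exp.2 (by linarith)

lemma two_mul_pow_le_mul_exp {T K : ℝ} {L B : ℕ} (hT : 3 ≤ T) (hK : 0 ≤ K)
    (hcheb : L * log T ≤ 8 * T) (hKB : K ≤ (B + 1) * (L * log T)) :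
    (2 * K) ^ L ≤ (B + 1) ^ L * exp (32 * T) := calc
  (2 * K) ^ L ≤ ((B + 1) * (16 * T)) ^ L :=
      pow_le_pow_left₀ (by positivity) (by nlinarith [(by positivity : (0 : ℝ) ≤ B + 1)]) L
  _ = (B + 1) ^ L * (16 * T) ^ L := mul_pow _ _ _
  _ ≤ (B + 1) ^ L * exp (32 * T) := by gcongr; exact pow_le_exp_of_mul_log_le hT hcheb

lemma two_mul_pow_le_sub_one_mul_exp {T K : ℝ} {L B : ℕ} (hT : 3 ≤ T) (hK : 0 ≤ K)
    (hL : 1 ≤ L) (hB : 1 ≤ B) (hcheb : L * log T ≤ 8 * T) (hKB : K ≤ (B + 1) * (L * log T)) :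
    (2 * K) ^ L ≤ ((B + 1) ^ L - 1) * exp (33 * T) := by
  have hpow : (2 : ℝ) ≤ (B + 1) ^ L := calc
    (2 : ℝ) ≤ (B + 1) ^ 1 := by rw [pow_one]; linarith [(Nat.one_le_cast (α := ℝ)).2 hB]
    _ ≤ (B + 1) ^ L := pow_le_pow_right₀ (by simp) hL
  have hexp : 2 * exp (32 * T) ≤ exp (33 * T) := by
    rw [show 33 * T = T + 32 * T by ring, exp_add]
    gcongr
    linarith [add_one_le_exp T]
  calc (2 * K) ^ L ≤ (B + 1) ^ L * exp (32 * T) := two_mul_pow_le_mul_exp hT hK hcheb hKB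
    _ ≤ ((B + 1) ^ L - 1) * (2 * exp (32 * T)) := by nlinarith [exp_pos (32 * T)]
    _ ≤ ((B + 1) ^ L - 1) * exp (33 * T) := by gcongr; linarith

lemma pow_le_two_pow_of_mul_log_le {t a k : ℕ} {T : ℝ} (ht : 1 ≤ t) (htT : (t : ℝ) ≤ T)
    (h : a * log T ≤ k * log 2) : t ^ a ≤ 2 ^ k := by
  have ht' : (1 : ℝ) ≤ t := by exact_mod_cast ht
  suffices (t : ℝ) ^ a ≤ 2 ^ k by exact_mod_cast this
  rw [← log_le_log_iff (by positivity) (by positivity), log_pow, log_pow]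
  exact (mul_le_mul_of_nonneg_left (log_le_log (by linarith) htT) (Nat.cast_nonneg a)).trans h

noncomputable def gapBound (y : ℝ → ℝ) (c : ℝ) (m : ℕ) : ℝ :=
  m * exp (c * y m) / log m ^ (primePi (y √m) - 1)

section Dyadic

variable {y : ℝ → ℝ} {k m : ℕ}

lemma log_pow_primePi_le (hy : MonotoneOn y (Set.Ioi 0)) (hk : 1 ≤ k)
    (hm : m ∈ Ico (2 ^ k) (2 ^ (k + 1))) :
    0 < log m ∧
      log m ^ (primePi (y √m) - 1) ≤ (2 * (k * log 2)) ^ (primePi (y (2 ^ k)) - 1) := by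
  obtain ⟨hlo, hhi⟩ := Finset.mem_Ico.1 hm
  have hlo' : (2 : ℝ) ^ k ≤ m := by exact_mod_cast hlo
  have hhi' : (m : ℝ) < 2 ^ (k + 1) := by exact_mod_cast hhi
  have hk' : (1 : ℝ) ≤ k := by exact_mod_cast hk
  have h2k : (2 : ℝ) ≤ 2 ^ k := by simpa using pow_le_pow_right₀ one_le_two hk
  have hlog_pos : 0 < log m := log_pos (by linarith)
  have hlog_le : log m ≤ 2 * (k * log 2) := calc
    log m ≤ log (2 ^ (k + 1)) := log_le_log (by linarith) hhi'.le
    _ = (k + 1) * log 2 := by rw [log_pow]; push_cast; ring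
    _ ≤ 2 * (k * log 2) := by nlinarith [log_pos one_lt_two]
  have hsqrt : √m ≤ 2 ^ k := by
    rw [sqrt_le_left (by positivity)]
    calc (m : ℝ) ≤ 2 ^ (k + 1) := hhi'.le
      _ ≤ 2 ^ (k + k) := pow_le_pow_right₀ one_le_two (by omega)
      _ = (2 ^ k) ^ 2 := by ring
  have hπ : primePi (y √m) ≤ primePi (y (2 ^ k)) :=
    Nat.monotone_primeCounting <| Nat.floor_mono <|
      hy (sqrt_pos.2 (by linarith)) (by positivity : (0 : ℝ) < 2 ^ k) hsqrt
  have hbase : 1 ≤ 2 * (k * log 2) := by nlinarith [log_two_gt_d9]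
  refine ⟨hlog_pos, ?_⟩
  calc log m ^ (primePi (y √m) - 1) ≤ (2 * (k * log 2)) ^ (primePi (y √m) - 1) :=
        pow_le_pow_left₀ hlog_pos.le hlog_le _
    _ ≤ _ := pow_le_pow_right₀ hbase (Nat.sub_le_sub_right hπ 1)

lemma div_le_gapBound (hy : MonotoneOn y (Set.Ioi 0)) {c : ℝ} (hc : 0 ≤ c) (hk : 1 ≤ k)
    (hm : m ∈ Ico (2 ^ k) (2 ^ (k + 1))) :
    2 ^ k * exp (c * y (2 ^ k)) / (2 * (k * log 2)) ^ (primePi (y (2 ^ k)) - 1) ≤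
      gapBound y c m := by
  obtain ⟨hlog_pos, hden⟩ := log_pow_primePi_le hy hk hm
  have hlo : (2 : ℝ) ^ k ≤ m := by exact_mod_cast (Finset.mem_Ico.1 hm).1
  have hy_le : y (2 ^ k) ≤ y m :=
    hy (by positivity : (0 : ℝ) < 2 ^ k) ((by positivity : (0 : ℝ) < 2 ^ k).trans_le hlo) hlo
  exact div_le_div₀ (by positivity)
    (mul_le_mul hlo (exp_le_exp.2 (mul_le_mul_of_nonneg_left hy_le hc)) (by positivity)
      (by positivity)) (pow_pos hlog_pos _) hden

end Dyadic

section Blocks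

variable {y : ℝ → ℝ} {n : ℕ → ℕ}

lemma exists_gap_lt_of_two_pow_lt (hy : MonotoneOn y (Set.Ioi 0))
    (hy3 : ∀ x : ℝ, 0 < x → 3 ≤ y x) (hn : StrictMonoOn n (Set.Ici 1))
    (hsurj : ∀ m ∈ smoothSet y, ∃ i, 1 ≤ i ∧ n i = m) (k : ℕ) {X : ℝ} (hX : 2 ^ k < X) :
    ∃ i, 1 ≤ i ∧ n i ∈ Ico (2 ^ k) (2 ^ (k + 1)) ∧ (n (i + 1) : ℝ) - n i < X := by
  obtain ⟨i, hi, hni⟩ := hsurj _ (two_pow_mem_smoothSet hy3 k)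
  have hgap : n (i + 1) ≤ 2 * 2 ^ k :=
    succ_le_of_mem_of_lt hn hsurj hi (two_mul_mem_smoothSet hy hy3 (two_pow_mem_smoothSet hy3 k))
      (by rw [hni]; linarith [Nat.one_le_two_pow (n := k)])
  refine ⟨i, hi, ?_, ?_⟩
  · rw [hni]
    exact Finset.mem_Ico.2 ⟨le_rfl, Nat.pow_lt_pow_right one_lt_two k.lt_succ_self⟩
  · have : (n (i + 1) : ℝ) ≤ 2 * 2 ^ k := by exact_mod_cast hgap
    rw [hni]
    push_cast
    linarith

lemma exists_gap_lt_of_smooth_count (hy : MonotoneOn y (Set.Ioi 0))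
    (hn : StrictMonoOn n (Set.Ici 1)) (hsurj : ∀ m ∈ smoothSet y, ∃ i, 1 ≤ i ∧ n i = m)
    {t B k : ℕ} {X : ℝ} (ht : 2 ≤ t) (htT : (t : ℝ) ≤ y (2 ^ k))
    (hcount : t ^ (B * (Nat.primeCounting t - 1)) ≤ 2 ^ k) (hX : 0 ≤ X)
    (hBX : 2 ^ k ≤ ((B + 1) ^ (Nat.primeCounting t - 1) - 1) * X) :
    ∃ i, 1 ≤ i ∧ n i ∈ Ico (2 ^ k) (2 ^ (k + 1)) ∧ (n (i + 1) : ℝ) - n i < X := by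
  have hcard := card_smooth_Ico_two_pow_ge ht hcount
  refine exists_gap_lt_of_card_mul_ge hn hsurj
    (Finset.card_pos.1 ((pow_pos B.succ_pos _).trans_le hcard)) (fun m hm => ?_)
    (Finset.filter_subset _ _) hX ?_
  · obtain ⟨hm_Ico, hm_t⟩ := Finset.mem_filter.1 hm
    exact mem_smoothSet_of_le hy (by positivity) (by exact_mod_cast (Finset.mem_Ico.1 hm_Ico).1)
      ((Nat.cast_le.2 hm_t).trans htT)
  · have hcard' : ((B + 1) ^ (Nat.primeCounting t - 1) : ℝ) ≤
        #{m ∈ Ico (2 ^ k) (2 ^ (k + 1)) | maxPrimeFactor m ≤ t} := by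
      exact_mod_cast hcard
    calc ((2 ^ (k + 1) : ℕ) : ℝ) - (2 ^ k : ℕ) = 2 ^ k := by push_cast; ring
      _ ≤ ((B + 1) ^ (Nat.primeCounting t - 1) - 1) * X := hBX
      _ ≤ _ := by gcongr

theorem exists_gap_lt_in_dyadic_block (hy : MonotoneOn y (Set.Ioi 0))
    (hy3 : ∀ x : ℝ, 0 < x → 3 ≤ y x) (hn : StrictMonoOn n (Set.Ici 1))
    (hsurj : ∀ m ∈ smoothSet y, ∃ i, 1 ≤ i ∧ n i = m) {k : ℕ} (hk : 1 ≤ k) :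
    ∃ i, 1 ≤ i ∧ n i ∈ Ico (2 ^ k) (2 ^ (k + 1)) ∧
      (n (i + 1) : ℝ) - n i <
        2 ^ k * exp (33 * y (2 ^ k)) / (2 * (k * log 2)) ^ (primePi (y (2 ^ k)) - 1) := by
  set T := y (2 ^ k)
  set L := primePi T - 1
  set K := (k : ℝ) * log 2
  have hT : 3 ≤ T := hy3 _ (by positivity)
  have hL : 1 ≤ L := one_le_primePi_sub_one hT
  have hcheb : L * log T ≤ 8 * T := primePi_sub_one_mul_log_le (by linarith)
  have hK : 0 < K := mul_pos (by exact_mod_cast hk) (log_pos one_lt_two)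
  have hLT : 0 < L * log T := mul_pos (by exact_mod_cast hL) (log_pos (by linarith))
  rcases lt_or_ge K (L * log T) with hsmall | hlarge
  · refine exists_gap_lt_of_two_pow_lt hy hy3 hn hsurj k ?_
    have hden : (2 * K) ^ L < exp (33 * T) := calc
      (2 * K) ^ L ≤ ((0 : ℕ) + 1) ^ L * exp (32 * T) :=
          two_mul_pow_le_mul_exp hT hK.le hcheb (by simpa using hsmall.le)
      _ < exp (33 * T) := by simpa using exp_lt_exp.2 (by linarith)
    rw [lt_div_iff₀ (by positivity)]
    exact mul_lt_mul_of_pos_left hden (by positivity)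
  · set B := ⌊K / (L * log T)⌋₊
    have hB : 1 ≤ B := Nat.le_floor (by rw [Nat.cast_one, one_le_div hLT]; exact hlarge)
    have hKB : K ≤ (B + 1) * (L * log T) := ((div_lt_iff₀ hLT).1 (Nat.lt_floor_add_one _)).le
    refine exists_gap_lt_of_smooth_count hy hn hsurj (t := ⌊T⌋₊) (B := B)
      (Nat.le_floor (by push_cast; linarith)) (Nat.floor_le (by linarith)) ?_ (by positivity) ?_
    · refine pow_le_two_pow_of_mul_log_le (Nat.le_floor (by push_cast; linarith))
        (Nat.floor_le (by linarith)) ?_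
      calc ((B * L : ℕ) : ℝ) * log T = B * (L * log T) := by push_cast; ring
        _ ≤ K / (L * log T) * (L * log T) :=
            mul_le_mul_of_nonneg_right (Nat.floor_le (by positivity)) hLT.le
        _ = k * log 2 := div_mul_cancel₀ _ hLT.ne'
    · have h := two_mul_pow_le_sub_one_mul_exp hT hK.le hL hB hcheb hKB
      rw [mul_div_assoc', le_div_iff₀ (by positivity)]
      calc 2 ^ k * (2 * K) ^ L ≤ 2 ^ k * (((B + 1) ^ L - 1) * exp (33 * T)) := by gcongr
        _ = ((B + 1) ^ L - 1) * (2 ^ k * exp (33 * T)) := mul_left_comm _ _ _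

end Blocks

theorem stmt1 :
    ∃ c₁ : ℝ, 0 < c₁ ∧
      ∀ y : ℝ → ℝ,
        (∀ a b : ℝ, 0 < a → a ≤ b → y a ≤ y b) →
        (∀ x : ℝ, 0 < x → 3 ≤ y x) →
        ∀ n : ℕ → ℕ,
          (∀ i j : ℕ, 1 ≤ i → i < j → n i < n j) →
          (∀ i : ℕ, 1 ≤ i → 0 < n i ∧ (maxPrimeFactor (n i) : ℝ) ≤ y (n i)) →
          (∀ m : ℕ, 0 < m → (maxPrimeFactor m : ℝ) ≤ y m → ∃ i : ℕ, 1 ≤ i ∧ n i = m) →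
          ∀ N : ℕ, ∃ i : ℕ, N ≤ i ∧ 1 ≤ i ∧
            (n (i + 1) : ℝ) - (n i : ℝ) <
              (n i : ℝ) * Real.exp (c₁ * y (n i)) /
                Real.log (n i) ^ (primePi (y (Real.sqrt (n i))) - 1) := by
  refine ⟨33, by norm_num, fun y hy_mono hy3 n hn_mono _ hn_surj N => ?_⟩
  have hy : MonotoneOn y (Set.Ioi 0) := fun a ha b _ hab => hy_mono a b ha hab
  have hn : StrictMonoOn n (Set.Ici 1) := fun i hi j _ hij => hn_mono i j hi hij
  obtain ⟨i, hi, hni, hgap⟩ :=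
    exists_gap_lt_in_dyadic_block hy hy3 hn (fun m hm => hn_surj m hm.1 hm.2) (k := n N + 1)
      (by omega)
  have hNi : N ≤ i := by
    by_contra! hiN
    have := hn_mono i N hi hiN
    have := (Finset.mem_Ico.1 hni).1
    have := (Nat.lt_two_pow_self (n := n N)).trans
      (Nat.pow_lt_pow_right one_lt_two (n N).lt_succ_self)
    omega
  exact ⟨i, hNi, hi, hgap.trans_le (div_le_gapBound hy (by norm_num) (by omega) hni)⟩
end

section
/- Assume the abc conjecture: for each ε > 0 there is a positive number c(ε) such that for all pairwise coprime positive integers x, y, z with x + y = z one has z < c(ε)·G^{1+ε}, where G is the product of the distinct primes dividing xyz. Then for every ε > 0 there exist a positive number c₁(ε) and a positive number c₂ such that the following holds: if y is a non-decreasing function from the positive real numbers to the real numbers with y(x) ≥ 3 for all x > 0, and n_1 < n_2 < n_3 < ... is the increasing sequence of all positive integers n with P(n) ≤ y(n), then for every i ≥ 1, n_{i+1} − n_i > c₁(ε)·n_i^{1−ε} / exp(c₂·y(n_{i+1})). -/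
open Real Filter

/-- The radical of `n`: the product of the distinct primes dividing `n`. -/
def rad (n : ℕ) : ℕ := n.primeFactors.prod id

/-!
Let `a = n i < b = n (i + 1)`; both are `y b`-smooth since `y` is monotone. Dividing by
`g = gcd a b`, the abc conjecture for the coprime triple `a/g + (b-a)/g = b/g` gives
`b/g < C (rad (a b) (b-a)/g) ^ (1+ε)`, and multiplying back by `g ≤ g ^ (1+ε)` yields
`b < C (rad (a b) (b-a)) ^ (1+ε)`. Smoothness bounds `rad (a b)` by the primorial of `y b`,
hence by `4 ^ y b`. Taking `(1+ε)`-th roots and using `1 - ε ≤ 1/(1+ε)` gives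
`a ^ (1-ε) < max C 1 · 4 ^ y b · (b - a)`, i.e. the theorem with `c₁ = 1 / max C 1`, `c₂ = log 4`.
-/

open UniqueFactorizationMonoid

lemma rad_eq_radical (n : ℕ) : rad n = radical n :=
  Nat.radical_eq_prod_primeFactors.symm

lemma le_maxPrimeFactor_s2 {n p : ℕ} (hp : p ∈ n.primeFactors) : p ≤ maxPrimeFactor n :=
  (Finset.le_sup (f := id) hp).trans (le_max_right _ _)

lemma maxPrimeFactor_mul {a b : ℕ} (ha : a ≠ 0) (hb : b ≠ 0) :
    maxPrimeFactor (a * b) = max (maxPrimeFactor a) (maxPrimeFactor b) := by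
  simp only [maxPrimeFactor, Nat.primeFactors_mul ha hb, Finset.sup_union]
  omega

lemma rad_le_primorial {n Y : ℕ} (h : maxPrimeFactor n ≤ Y) : rad n ≤ primorial Y := by
  refine Finset.prod_le_prod_of_subset_of_one_le' (fun p hp ↦ ?_) fun p hp _ ↦ ?_
  · exact Nat.mem_primesLE.2 ⟨(le_maxPrimeFactor_s2 hp).trans h, Nat.prime_of_mem_primeFactors hp⟩
  · exact (Nat.prime_of_mem_primesLE hp).one_le

lemma rad_le_exp_log_four_mul {n : ℕ} {Y : ℝ} (hY : 0 ≤ Y) (h : (maxPrimeFactor n : ℝ) ≤ Y) :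
    (rad n : ℝ) ≤ exp (log 4 * Y) :=
  calc (rad n : ℝ) ≤ primorial ⌊Y⌋₊ := by exact_mod_cast rad_le_primorial (Nat.le_floor h)
    _ ≤ (4 : ℝ) ^ (⌊Y⌋₊ : ℝ) := by
      rw [rpow_natCast]; exact_mod_cast primorial_le_four_pow _
    _ ≤ (4 : ℝ) ^ Y := rpow_le_rpow_of_exponent_le (by norm_num) (Nat.floor_le hY)
    _ = exp (log 4 * Y) := rpow_def_of_pos (by norm_num) _

lemma rad_mul_le_rad_mul_of_dvd {m n k : ℕ} (hmk : m ∣ k) (hk : k ≠ 0) (hn : n ≠ 0) :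
    rad (m * n) ≤ rad k * n := by
  simp only [rad_eq_radical]
  calc radical (m * n) ≤ radical m * radical n := Nat.le_of_dvd (by positivity) radical_mul_dvd
    _ ≤ radical k * n := by
        gcongr
        · exact Nat.le_of_dvd (Nat.radical_pos k) (radical_dvd_radical hmk hk)
        · exact Nat.radical_le_self_iff.2 hn

def AbcBound (ε C : ℝ) : Prop :=
  ∀ x y z : ℕ, 0 < x → 0 < y → 0 < z →
    Nat.Coprime x y → Nat.Coprime y z → Nat.Coprime x z → x + y = z →
    (z : ℝ) < C * (rad (x * y * z) : ℝ) ^ ((1 : ℝ) + ε)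

lemma AbcBound.lt_mul_rad_mul_rpow {ε C : ℝ} (h : AbcBound ε C) (hε : 0 ≤ ε) (hC : 0 ≤ C)
    {a d b : ℕ} (ha : 0 < a) (hd : 0 < d) (hadb : a + d = b) :
    (b : ℝ) < C * ((rad (a * b) : ℝ) * d) ^ (1 + ε) := by
  obtain ⟨a', d', hco, ha_eq, hd_eq⟩ := Nat.exists_coprime a d
  have hg : 0 < a.gcd d := Nat.gcd_pos_of_pos_left d ha
  generalize a.gcd d = g at ha_eq hd_eq hg
  subst ha_eq hd_eq hadb
  have ha' : 0 < a' := Nat.pos_of_mul_pos_right ha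
  have hd' : 0 < d' := Nat.pos_of_mul_pos_right hd
  have habc := h a' d' (a' + d') ha' hd' (by omega) hco
    (by simpa [Nat.coprime_add_self_right] using hco.symm)
    (by simpa [Nat.coprime_self_add_right] using hco) rfl
  rw [← add_mul]
  have hrad : (rad (a' * d' * (a' + d')) : ℝ) ≤ rad (a' * g * ((a' + d') * g)) * d' := by
    rw [mul_right_comm]
    exact_mod_cast rad_mul_le_rad_mul_of_dvd
      (mul_dvd_mul (dvd_mul_right _ _) (dvd_mul_right _ _)) (by positivity) hd'.ne'
  set R : ℝ := (rad (a' * g * ((a' + d') * g)) : ℝ)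
  have hg1 : (1 : ℝ) ≤ g := by exact_mod_cast hg
  calc (((a' + d') * g : ℕ) : ℝ) = ((a' + d' : ℕ) : ℝ) * g := by push_cast; ring
    _ < C * (R * d') ^ (1 + ε) * g := by
        gcongr
        exact habc.trans_le (by gcongr)
    _ ≤ C * (R * d') ^ (1 + ε) * (g : ℝ) ^ (1 + ε) := by
        gcongr
        exact self_le_rpow_of_one_le hg1 (by linarith)
    _ = C * (R * ((d' * g : ℕ) : ℝ)) ^ (1 + ε) := by
        rw [mul_assoc, ← mul_rpow (by positivity) (by positivity)]; push_cast; ring_nf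

lemma rpow_one_sub_lt_of_lt_mul_rpow_one_add {a b C x ε : ℝ} (ha : 1 ≤ a) (hab : a ≤ b)
    (hC : 1 ≤ C) (hx : 0 ≤ x) (hε : 0 ≤ ε) (h : b < C * x ^ (1 + ε)) :
    a ^ (1 - ε) < C * x := by
  have hε1 : 0 < 1 + ε := by linarith
  calc a ^ (1 - ε) ≤ a ^ (1 / (1 + ε)) := by
        refine rpow_le_rpow_of_exponent_le ha ?_
        rw [le_div_iff₀ hε1]; nlinarith
    _ ≤ b ^ (1 / (1 + ε)) := by gcongr
    _ < (C * x ^ (1 + ε)) ^ (1 / (1 + ε)) := by gcongr; linarith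
    _ = C ^ (1 / (1 + ε)) * x := by
        rw [mul_rpow (by linarith) (by positivity), ← rpow_mul hx, mul_one_div_cancel hε1.ne',
          rpow_one]
    _ ≤ C * x := by
        gcongr
        exact rpow_le_self_of_one_le hC (by rw [div_le_one hε1]; linarith)

lemma AbcBound.rpow_one_sub_lt_mul_exp_mul_sub {ε C Y : ℝ} (h : AbcBound ε C) (hε : 0 ≤ ε)
    (hC : 0 ≤ C) (hY : 0 ≤ Y) {a b : ℕ} (ha : 0 < a) (hab : a < b)
    (hPa : (maxPrimeFactor a : ℝ) ≤ Y) (hPb : (maxPrimeFactor b : ℝ) ≤ Y) :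
    (a : ℝ) ^ (1 - ε) < max C 1 * exp (log 4 * Y) * ((b : ℝ) - a) := by
  have hrad : (rad (a * b) : ℝ) ≤ exp (log 4 * Y) := by
    refine rad_le_exp_log_four_mul hY ?_
    rw [maxPrimeFactor_mul ha.ne' (ha.trans hab).ne', Nat.cast_max]
    exact max_le hPa hPb
  have hgap := (h.lt_mul_rad_mul_rpow hε hC ha (Nat.sub_pos_of_lt hab)
    (Nat.add_sub_cancel' hab.le)).trans_le
    (mul_le_mul_of_nonneg_right (le_max_left C 1) (by positivity))
  rw [Nat.cast_sub hab.le] at hgap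
  calc (a : ℝ) ^ (1 - ε) < max C 1 * ((rad (a * b) : ℝ) * (b - a)) :=
        rpow_one_sub_lt_of_lt_mul_rpow_one_add (by exact_mod_cast ha)
          (by exact_mod_cast hab.le) (le_max_right C 1)
          (mul_nonneg (by positivity) (by simp [hab.le])) hε hgap
    _ ≤ max C 1 * exp (log 4 * Y) * (b - a) := by
        rw [mul_assoc]; gcongr; simp [hab.le]

theorem stmt2
    (habc : ∀ ε : ℝ, 0 < ε → ∃ C : ℝ, 0 < C ∧
      ∀ x y z : ℕ, 0 < x → 0 < y → 0 < z →
        Nat.Coprime x y → Nat.Coprime y z → Nat.Coprime x z → x + y = z →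
        (z : ℝ) < C * (rad (x * y * z) : ℝ) ^ ((1 : ℝ) + ε)) :
    ∀ ε : ℝ, 0 < ε → ∃ c₁ : ℝ, 0 < c₁ ∧ ∃ c₂ : ℝ, 0 < c₂ ∧
      ∀ y : ℝ → ℝ,
        (∀ a b : ℝ, 0 < a → a ≤ b → y a ≤ y b) →
        (∀ x : ℝ, 0 < x → 3 ≤ y x) →
        ∀ n : ℕ → ℕ,
          (∀ i j : ℕ, 1 ≤ i → i < j → n i < n j) →
          (∀ i : ℕ, 1 ≤ i → 0 < n i ∧ (maxPrimeFactor (n i) : ℝ) ≤ y (n i)) →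
          (∀ m : ℕ, 0 < m → (maxPrimeFactor m : ℝ) ≤ y m → ∃ i : ℕ, 1 ≤ i ∧ n i = m) →
          ∀ i : ℕ, 1 ≤ i →
            c₁ * (n i : ℝ) ^ ((1 : ℝ) - ε) / Real.exp (c₂ * y (n (i + 1))) <
              (n (i + 1) : ℝ) - (n i : ℝ) := by
  intro ε hε
  obtain ⟨C, hC, hbound⟩ := habc ε hε
  refine ⟨1 / max C 1, by positivity, log 4, log_pos (by norm_num), ?_⟩
  intro y hmono hy3 n hlt hsmooth _ i hi
  obtain ⟨ha, hPa⟩ := hsmooth i hi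
  obtain ⟨hb, hPb⟩ := hsmooth (i + 1) (by omega)
  have hab : n i < n (i + 1) := hlt i (i + 1) hi (by omega)
  have hPa' : (maxPrimeFactor (n i) : ℝ) ≤ y (n (i + 1)) :=
    hPa.trans (hmono _ _ (by exact_mod_cast ha) (by exact_mod_cast hab.le))
  have hgap := AbcBound.rpow_one_sub_lt_mul_exp_mul_sub hbound hε.le hC.le
    (by linarith [hy3 _ (Nat.cast_pos.2 hb)]) ha hab hPa' hPb
  rw [div_lt_iff₀ (exp_pos _), one_div_mul_eq_div, div_lt_iff₀ (by positivity)]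
  linarith
end

section
/- Assume the abc conjecture: for each ε > 0 there is a positive number c(ε) such that for all pairwise coprime positive integers x, y, z with x + y = z one has z < c(ε)·G^{1+ε}, where G is the product of the distinct primes dividing xyz. Let y be a non-decreasing function from the positive real numbers to the real numbers with y(x) ≥ 3 for all x > 0, and let n_1 < n_2 < n_3 < ... be the increasing sequence of all positive integers n with P(n) ≤ y(n). If y(n) = o(log n) as n → ∞, then n_{i+1} − n_i tends to infinity as i → ∞. -/
open Real Filter Asymptotics

/-!
Let `m < m'` be consecutive terms, with gap `k = m' - m`. Dividing `k, m, m'` by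
`gcd m m'` gives an abc triple whose radical is at most `k · rad m · rad m'`. Since
`y = o(log)`, a large `m` with `P(m) ≤ y(m)` has `rad m ≤ 4 ^ P(m) ≤ m ^ (1/8)`
(primorial bound), so the abc inequality with `ε = 1` gives
`m' < C k (k m'^(1/4))^2`, i.e. `m' < (C k^3)^2`. As `m' → ∞`, so does `k`.
-/

lemma rad_pos (m : ℕ) : 0 < rad m :=
  Finset.prod_pos fun _ hp => (Nat.prime_of_mem_primeFactors hp).pos

lemma rad_le_self {m : ℕ} (hm : m ≠ 0) : rad m ≤ m :=
  Nat.le_of_dvd (Nat.pos_of_ne_zero hm) (Nat.prod_primeFactors_dvd m)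

lemma rad_le_rad_of_dvd {a b : ℕ} (h : a ∣ b) (hb : b ≠ 0) : rad a ≤ rad b :=
  Nat.le_of_dvd (rad_pos b)
    (Finset.prod_dvd_prod_of_subset _ _ _ (Nat.primeFactors_mono h hb))

lemma rad_mul_le {a b : ℕ} (ha : a ≠ 0) (hb : b ≠ 0) : rad (a * b) ≤ rad a * rad b := by
  unfold rad
  rw [Nat.primeFactors_mul ha hb, ← Finset.prod_union_inter]
  exact Nat.le_mul_of_pos_right _
    (Finset.prod_pos fun p hp => (Nat.prime_of_mem_primeFactors (Finset.mem_inter.mp hp).1).pos)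

lemma rad_le_four_pow_maxPrimeFactor (m : ℕ) : rad m ≤ 4 ^ maxPrimeFactor m := by
  refine le_trans (Nat.le_of_dvd (primorial_pos _) ?_) (primorial_le_four_pow _)
  refine Finset.prod_dvd_prod_of_subset _ _ _ fun p hp => ?_
  simp only [Finset.mem_filter, Finset.mem_range]
  exact ⟨Nat.lt_succ_of_le (le_max_of_le_right (Finset.le_sup (f := id) hp)),
    Nat.prime_of_mem_primeFactors hp⟩

lemma rad_le_rpow_of_maxPrimeFactor_le {m : ℕ} (hm : 0 < m) {δ : ℝ}
    (h : (maxPrimeFactor m : ℝ) * log 4 ≤ δ * log m) : (rad m : ℝ) ≤ (m : ℝ) ^ δ := by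
  have hm' : (0 : ℝ) < m := by exact_mod_cast hm
  calc (rad m : ℝ) ≤ (4 : ℝ) ^ (maxPrimeFactor m : ℝ) := by
        rw [rpow_natCast]; exact_mod_cast rad_le_four_pow_maxPrimeFactor m
    _ ≤ (m : ℝ) ^ δ := by
        rw [rpow_def_of_pos (by norm_num), rpow_def_of_pos hm']
        exact exp_le_exp.mpr (by linarith)

lemma eventually_rad_le_rpow_of_isLittleO {y : ℝ → ℝ} (hy : y =o[atTop] log) {δ : ℝ}
    (hδ : 0 < δ) :
    ∀ᶠ m : ℕ in atTop, (maxPrimeFactor m : ℝ) ≤ y m → (rad m : ℝ) ≤ (m : ℝ) ^ δ := by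
  have hlog4 : 0 < log 4 := log_pos (by norm_num)
  filter_upwards [tendsto_natCast_atTop_atTop.eventually (hy.bound (div_pos hδ hlog4)),
    eventually_ge_atTop 1] with m hbound hm hP
  have hlog : 0 ≤ log m := log_nonneg (by exact_mod_cast hm)
  have hym : y m ≤ δ / log 4 * log m := by
    simpa only [norm_eq_abs, abs_of_nonneg hlog] using (le_abs_self _).trans hbound
  refine rad_le_rpow_of_maxPrimeFactor_le hm ?_
  calc (maxPrimeFactor m : ℝ) * log 4 ≤ δ / log 4 * log m * log 4 := by gcongr; linarith
    _ = δ * log m := by field_simp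

def ABCBound (C e : ℝ) : Prop :=
  ∀ x y z : ℕ, 0 < x → 0 < y → 0 < z →
    Nat.Coprime x y → Nat.Coprime y z → Nat.Coprime x z → x + y = z →
    (z : ℝ) < C * (rad (x * y * z) : ℝ) ^ e

namespace ABCBound

variable {C e : ℝ}

theorem lt_mul_rad_rpow (h : ABCBound C e) (hC : 0 < C) (he : 0 ≤ e) {m m' : ℕ}
    (hm : 0 < m) (hlt : m < m') :
    (m' : ℝ) < C * (m' - m : ℕ) * (rad ((m' - m) * m * m') : ℝ) ^ e := by
  obtain ⟨g, a, c, hg, hac, rfl, rfl⟩ := Nat.exists_coprime' (Nat.gcd_pos_of_pos_left m' hm)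
  have hlt' : a < c := Nat.lt_of_mul_lt_mul_right hlt
  have ha : 0 < a := Nat.pos_of_mul_pos_right hm
  obtain ⟨b, rfl⟩ : ∃ b, c = b + a := ⟨c - a, by omega⟩
  have hb : 0 < b := by omega
  rw [← Nat.sub_mul, Nat.add_sub_cancel]
  have hab : a.Coprime b := Nat.coprime_add_self_right.mp hac
  have hbc : b.Coprime (b + a) := Nat.coprime_self_add_right.mpr hab.symm
  have habc : (b + a : ℝ) < C * (rad (b * a * (b + a)) : ℝ) ^ e := by
    exact_mod_cast h b a (b + a) hb ha (by omega) hab.symm hac hbc rfl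
  have hdvd : b * a * (b + a) ∣ b * g * (a * g) * ((b + a) * g) :=
    ⟨g ^ 3, by ring⟩
  have hrad : (rad (b * a * (b + a)) : ℝ) ≤ rad (b * g * (a * g) * ((b + a) * g)) := by
    exact_mod_cast rad_le_rad_of_dvd hdvd (by positivity)
  have hgb : (g : ℝ) ≤ b * g := le_mul_of_one_le_left (by positivity) (by exact_mod_cast hb)
  push_cast
  calc ((b : ℝ) + a) * g < C * (rad (b * a * (b + a)) : ℝ) ^ e * g :=
        mul_lt_mul_of_pos_right habc (by exact_mod_cast hg)
    _ ≤ C * (rad (b * g * (a * g) * ((b + a) * g)) : ℝ) ^ e * (b * g) := by gcongr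
    _ = _ := by ring

theorem lt_sq_of_rad_le_rpow (h : ABCBound C 2) (hC : 0 < C) {m m' : ℕ} (hm : 0 < m)
    (hlt : m < m') (hrad : (rad m : ℝ) ≤ (m : ℝ) ^ (8⁻¹ : ℝ))
    (hrad' : (rad m' : ℝ) ≤ (m' : ℝ) ^ (8⁻¹ : ℝ)) :
    (m' : ℝ) < (C * (m' - m : ℕ) ^ 3) ^ 2 := by
  set k := m' - m
  set s := (m' : ℝ) ^ (8⁻¹ : ℝ)
  have hk : k ≠ 0 := by omega
  have hs : 0 < s := rpow_pos_of_pos (by exact_mod_cast hm.trans hlt) _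
  have hs8 : s ^ 8 = m' := by
    rw [← rpow_natCast, ← rpow_mul (by positivity)]; norm_num
  have hrad_mul : (rad (k * m * m') : ℝ) ≤ k * s ^ 2 := by
    have hmul := rad_mul_le (Nat.mul_ne_zero hk hm.ne') (hm.trans hlt).ne'
    have hmul' := rad_mul_le hk hm.ne'
    have hradk : (rad k : ℝ) ≤ k := by exact_mod_cast rad_le_self hk
    have hrad_m : (rad m : ℝ) ≤ s :=
      hrad.trans (rpow_le_rpow (by positivity) (by exact_mod_cast hlt.le) (by norm_num))
    calc (rad (k * m * m') : ℝ) ≤ rad k * rad m * rad m' := by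
          exact_mod_cast hmul.trans (Nat.mul_le_mul_right _ hmul')
      _ ≤ k * s * s := by gcongr
      _ = k * s ^ 2 := by ring
  have habc := h.lt_mul_rad_rpow hC zero_le_two hm hlt
  rw [rpow_two] at habc
  have hs4 : s ^ 4 < C * k ^ 3 := by
    have : s ^ 4 * s ^ 4 < C * k ^ 3 * s ^ 4 :=
      calc s ^ 4 * s ^ 4 = m' := by rw [← hs8]; ring
        _ < C * k * (k * s ^ 2) ^ 2 := habc.trans_le (by gcongr)
        _ = C * k ^ 3 * s ^ 4 := by ring
    exact lt_of_mul_lt_mul_right this (by positivity)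
  rw [← hs8, show s ^ 8 = (s ^ 4) ^ 2 by ring]
  exact pow_lt_pow_left₀ hs4 (by positivity) two_ne_zero

end ABCBound

theorem stmt4_general
    (habc : ∀ ε : ℝ, 0 < ε → ∃ C : ℝ, 0 < C ∧
      ∀ x y z : ℕ, 0 < x → 0 < y → 0 < z →
        Nat.Coprime x y → Nat.Coprime y z → Nat.Coprime x z → x + y = z →
        (z : ℝ) < C * (rad (x * y * z) : ℝ) ^ ((1 : ℝ) + ε))
    (y : ℝ → ℝ)
    (n : ℕ → ℕ)
    (hinc : ∀ i j : ℕ, 1 ≤ i → i < j → n i < n j)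
    (hseq : ∀ i : ℕ, 1 ≤ i → 0 < n i ∧ (maxPrimeFactor (n i) : ℝ) ≤ y (n i))
    (hlittleo : (fun x : ℝ => y x) =o[atTop] Real.log) :
    Tendsto (fun i : ℕ => n (i + 1) - n i) atTop atTop := by
  obtain ⟨C, hC, habc₁⟩ := habc 1 one_pos
  have hABC : ABCBound C 2 := by rwa [one_add_one_eq_two] at habc₁
  have hn : Tendsto n atTop atTop := (tendsto_add_atTop_iff_nat 1).mp
    (StrictMono.tendsto_atTop fun i j hij => hinc _ _ (by omega) (by omega))
  have hsmall : ∀ᶠ i in atTop, (rad (n i) : ℝ) ≤ (n i : ℝ) ^ (8⁻¹ : ℝ) := by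
    filter_upwards [hn.eventually (eventually_rad_le_rpow_of_isLittleO hlittleo (δ := 8⁻¹) (by norm_num)),
      eventually_ge_atTop 1] with i hi h1 using hi (hseq i h1).2
  have hgap : ∀ᶠ i in atTop, (n (i + 1) : ℝ) < (C * (n (i + 1) - n i : ℕ) ^ 3) ^ 2 := by
    filter_upwards [hsmall, (tendsto_add_atTop_nat 1).eventually hsmall,
      eventually_ge_atTop 1] with i h h' hi
    exact hABC.lt_sq_of_rad_le_rpow hC (hseq i hi).1 (hinc i (i + 1) hi i.lt_succ_self) h h'
  refine tendsto_atTop.mpr fun b => ?_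
  filter_upwards [hgap, (tendsto_add_atTop_nat 1).eventually
    (hn.eventually_ge_atTop ⌈(C * (b : ℝ) ^ 3) ^ 2⌉₊)] with i hi hlarge
  have hsq : (C * (b : ℝ) ^ 3) ^ 2 < (C * (n (i + 1) - n i : ℕ) ^ 3) ^ 2 :=
    (Nat.ceil_le.mp hlarge).trans_lt hi
  have hcube := lt_of_mul_lt_mul_left (lt_of_pow_lt_pow_left₀ 2 (by positivity) hsq) hC.le
  exact_mod_cast (lt_of_pow_lt_pow_left₀ 3 (by positivity) hcube).le

theorem stmt4
    (habc : ∀ ε : ℝ, 0 < ε → ∃ C : ℝ, 0 < C ∧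
      ∀ x y z : ℕ, 0 < x → 0 < y → 0 < z →
        Nat.Coprime x y → Nat.Coprime y z → Nat.Coprime x z → x + y = z →
        (z : ℝ) < C * (rad (x * y * z) : ℝ) ^ ((1 : ℝ) + ε))
    (y : ℝ → ℝ)
    (hmono : ∀ a b : ℝ, 0 < a → a ≤ b → y a ≤ y b)
    (hge3 : ∀ x : ℝ, 0 < x → 3 ≤ y x)
    (n : ℕ → ℕ)
    (hinc : ∀ i j : ℕ, 1 ≤ i → i < j → n i < n j)
    (hseq : ∀ i : ℕ, 1 ≤ i → 0 < n i ∧ (maxPrimeFactor (n i) : ℝ) ≤ y (n i))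
    (hall : ∀ m : ℕ, 0 < m → (maxPrimeFactor m : ℝ) ≤ y m → ∃ i : ℕ, 1 ≤ i ∧ n i = m)
    (hlittleo : (fun x : ℝ => y x) =o[atTop] Real.log) :
    Tendsto (fun i : ℕ => n (i + 1) - n i) atTop atTop :=
  stmt4_general habc y n hinc hseq hlittleo
end

section
/- For every positive real number c₅ there exists an effectively computable positive real number c₈ such that for every real number Y ≥ 3 with r = π(Y) ≥ 2, one has (c₅·log r)^r < δ(c₈·Y). -/
open Real

/-- `iteratedLog k` is the `k`-th iterate of `x ↦ max 1 (log x)`. -/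
noncomputable def iteratedLog : ℕ → ℝ → ℝ
  | 0, x => x
  | k + 1, x => max 1 (Real.log (iteratedLog k x))

/-- `smallDelta x = exp (x · log₂ x / log x)`. -/
noncomputable def smallDelta (x : ℝ) : ℝ := Real.exp (x * iteratedLog 2 x / Real.log x)

/-!
Chebyshev's bound `π(Y) log Y ≤ 5Y` and `π(Y) ≤ Y` give
`log ((c₅ log r)^r) ≤ r (log c₅ + log₂ Y) ≤ 5 (c₅ + 1) Y log₂ Y / log Y`.
On the other side, for `c₈ = (2K)²` one has `log (c₈ Y) < 4K log Y` and `log₂ (c₈ Y) ≥ log₂ Y`,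
so the exponent of `δ(c₈ Y)` exceeds `K Y log₂ Y / log Y`; take `K = 5 (c₅ + 1)`.
-/

lemma Nat.primeCounting_le_self (n : ℕ) : n.primeCounting ≤ n := by
  rw [← Nat.primesLE_card_eq_primeCounting, Nat.primesLE_eq_filter_Icc_one]
  simpa using Finset.card_filter_le (Finset.Icc 1 n) Nat.Prime

lemma primePi_le_self {x : ℝ} (hx : 0 ≤ x) : (primePi x : ℝ) ≤ x :=
  (Nat.cast_le.mpr (Nat.primeCounting_le_self _)).trans (Nat.floor_le hx)

lemma primePi_mul_log_le {x : ℝ} (hx : 1 < x) : primePi x * log x ≤ 5 * x := by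
  have hx0 : 0 ≤ x := by linarith
  have hlog : 0 < log x := log_pos hx
  have hπ : (primePi x : ℝ) ≤ log 4 * x / (log x / 2) + √x := by
    simpa only [primePi, log_sqrt hx0] using Chebyshev.pi_le_log4_mul_div hx
  have hlog_le : log x ≤ 2 * √x := by
    have := log_le_sub_one_of_pos (sqrt_pos.2 (by linarith : 0 < x))
    rw [log_sqrt hx0] at this
    linarith
  have hlog4 : log 4 < 3 / 2 := by
    rw [show (4 : ℝ) = 2 ^ 2 by norm_num, log_pow]
    have := log_two_lt_d9
    push_cast
    linarith
  calc (primePi x : ℝ) * log x ≤ (log 4 * x / (log x / 2) + √x) * log x := by gcongr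
    _ = 2 * log 4 * x + √x * log x := by field_simp
    _ ≤ 2 * log 4 * x + √x * (2 * √x) := by gcongr
    _ = 2 * log 4 * x + 2 * x := by rw [mul_left_comm, mul_self_sqrt hx0]
    _ ≤ 5 * x := by nlinarith

lemma one_le_iteratedLog_succ (k : ℕ) (x : ℝ) : 1 ≤ iteratedLog (k + 1) x :=
  le_max_left _ _

lemma iteratedLog_pos : ∀ (k : ℕ) {x : ℝ}, 0 < x → 0 < iteratedLog k x
  | 0, _, hx => hx
  | k + 1, x, _ => one_pos.trans_le (one_le_iteratedLog_succ k x)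

lemma iteratedLog_monotoneOn (k : ℕ) : MonotoneOn (iteratedLog k) (Set.Ioi 0) := by
  intro x hx y _ hxy
  induction k with
  | zero => exact hxy
  | succ k ih => exact max_le_max le_rfl (log_le_log (iteratedLog_pos k hx) ih)

lemma log_log_le_iteratedLog_two {x : ℝ} (hx : 1 < x) : log (log x) ≤ iteratedLog 2 x :=
  (log_le_log (log_pos hx) (le_max_right 1 (log x))).trans (le_max_right 1 _)

lemma log_mul_log_le {c x : ℝ} (hc : 0 < c) (hx : 1 < x) :
    log (c * log x) ≤ (c + 1) * iteratedLog 2 x := by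
  rw [log_mul hc.ne' (log_pos hx).ne']
  nlinarith [log_le_sub_one_of_pos hc, log_log_le_iteratedLog_two hx,
    one_le_iteratedLog_succ 1 x]

lemma log_sq_mul_lt {K x : ℝ} (hK : 1 ≤ K) (hx : 1 ≤ log x) :
    log (K ^ 2 * x) < 2 * K * log x := by
  have hx0 : x ≠ 0 := by rintro rfl; norm_num at hx
  rw [log_mul (by positivity) hx0, log_pow, Nat.cast_ofNat]
  nlinarith [log_le_sub_one_of_pos (by linarith : 0 < K),
    mul_nonneg (by linarith : 0 ≤ 2 * K - 1) (by linarith : 0 ≤ log x - 1)]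

lemma mul_log_primePi_pow_le {c x : ℝ} (hc : 0 < c) (hx : 1 < x) (hr : 2 ≤ primePi x) :
    (c * log (primePi x)) ^ primePi x ≤ exp (5 * (c + 1) * x * iteratedLog 2 x / log x) := by
  have hr : (1 : ℝ) < primePi x := by exact_mod_cast hr
  rw [← exp_log (pow_pos (mul_pos hc (log_pos hr)) _), log_pow, exp_le_exp]
  calc (primePi x : ℝ) * log (c * log (primePi x)) ≤ primePi x * log (c * log x) := by
        gcongr
        · exact mul_pos hc (log_pos hr)
        · exact primePi_le_self (by linarith)
    _ ≤ primePi x * ((c + 1) * iteratedLog 2 x) := by gcongr; exact log_mul_log_le hc hx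
    _ ≤ 5 * x / log x * ((c + 1) * iteratedLog 2 x) := by
        have := one_le_iteratedLog_succ 1 x
        gcongr
        rw [le_div_iff₀ (log_pos hx)]
        exact primePi_mul_log_le hx
    _ = 5 * (c + 1) * x * iteratedLog 2 x / log x := by ring

lemma exp_lt_smallDelta {K x : ℝ} (hK : 1 / 2 ≤ K) (hx : exp 1 ≤ x) :
    exp (K * x * iteratedLog 2 x / log x) < smallDelta ((2 * K) ^ 2 * x) := by
  have hx0 : 0 < x := (exp_pos 1).trans_le hx
  have hlog : 1 ≤ log x := by rwa [le_log_iff_exp_le hx0]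
  set X := (2 * K) ^ 2 * x
  have hxX : x ≤ X := le_mul_of_one_le_left hx0.le (by nlinarith)
  have hlogX : 0 < log X := by linarith [log_le_log hx0 hxX]
  have hL : iteratedLog 2 x ≤ iteratedLog 2 X := iteratedLog_monotoneOn 2 hx0 (hx0.trans_le hxX) hxX
  have hL0 : 0 < iteratedLog 2 x := iteratedLog_pos 2 hx0
  rw [smallDelta, exp_lt_exp]
  calc K * x * iteratedLog 2 x / log x = X * iteratedLog 2 x / (2 * (2 * K) * log x) := by
        field_simp
        ring
    _ < X * iteratedLog 2 x / log X :=
        div_lt_div_of_pos_left (by positivity) hlogX (log_sq_mul_lt (by linarith) hlog)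
    _ ≤ X * iteratedLog 2 X / log X := by gcongr

theorem stmt10 :
    ∀ c₅ : ℝ, 0 < c₅ →
      ∃ c₈ : ℝ, 0 < c₈ ∧
        ∀ Y : ℝ, 3 ≤ Y → 2 ≤ primePi Y →
          (c₅ * Real.log (primePi Y)) ^ primePi Y < smallDelta (c₈ * Y) := by
  intro c₅ hc₅
  refine ⟨(2 * (5 * (c₅ + 1))) ^ 2, by positivity, fun Y hY hr => ?_⟩
  have hY' : exp 1 ≤ Y := (exp_one_lt_d9.trans (by norm_num)).le.trans hY
  calc (c₅ * log (primePi Y)) ^ primePi Y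
      ≤ exp (5 * (c₅ + 1) * Y * iteratedLog 2 Y / log Y) :=
        mul_log_primePi_pow_le hc₅ (by linarith) hr
    _ < smallDelta ((2 * (5 * (c₅ + 1))) ^ 2 * Y) := exp_lt_smallDelta (by linarith) hY'
end

section
/- There exists a positive real number c₁₂ such that the following holds. Let y be a non-decreasing function from the positive real numbers to the real numbers with y(x) ≥ 3 for all x > 0, and let X be a real number with X > c₁₂ and y(√X) ≤ (log X)^{1/4}. Let r = π(y(√X)) and let p₁ < ... < p_r be the primes at most y(√X). Then the number of integers n with √X < n ≤ X and P(n) ≤ y(√X) is at least (log X)^r / (2·∏_{i=1}^{r} i·log p_i). -/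
open Real Finset
open scoped Classical

/-! Let `S` be the set of primes `≤ y(√X)`, `r = #S` and `L = log X`. The `S`-factored `n` with
`log n ≤ T` correspond to the lattice points of the simplex `∑ aₚ log p ≤ T`; summing over the
exponent of one prime and comparing the sum with `∫ (k + 1) t ^ k dt` gives, by induction on `S`,
`T ^ r ≤ r! ∏ log p · #{n | log n ≤ T} ≤ (T + ∑ log p) ^ r`.
Since `∑ log p = θ(y(√X)) ≤ L / 5` by Chebyshev's bound and `r ≥ 2`, the upper bound at `T = L / 2`
is at most half the lower bound at `T = L`, and the difference counts `n` with `√X < n ≤ X`. -/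

open scoped Nat

lemma pow_succ_sub_pow_succ_le {a b : ℝ} (hb : 0 ≤ b) (hba : b ≤ a) (k : ℕ) :
    a ^ (k + 1) - b ^ (k + 1) ≤ (k + 1) * (a - b) * a ^ k := by
  have h := abs_pow_sub_pow_le a b (k + 1)
  rw [abs_of_nonneg (sub_nonneg.2 (pow_le_pow_left₀ hb hba _)), abs_of_nonneg (sub_nonneg.2 hba),
    abs_of_nonneg hb, abs_of_nonneg (hb.trans hba), max_eq_left hba] at h
  push_cast at h
  simpa [mul_comm, mul_left_comm, mul_assoc] using h

lemma mul_pow_le_pow_succ_sub_pow_succ {a b : ℝ} (hb : 0 ≤ b) (hba : b ≤ a) (k : ℕ) :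
    (k + 1) * (a - b) * b ^ k ≤ a ^ (k + 1) - b ^ (k + 1) := by
  rw [← geom_sum₂_mul, Nat.add_sub_cancel]
  have hterm : ∀ i ∈ range (k + 1), b ^ k ≤ a ^ i * b ^ (k - i) := fun i hi => by
    rw [← pow_mul_pow_sub b (Nat.lt_succ_iff.1 (mem_range.1 hi))]
    gcongr
  have hsum := Finset.card_nsmul_le_sum _ _ _ hterm
  rw [card_range, nsmul_eq_mul] at hsum
  push_cast at hsum
  rw [mul_right_comm]
  exact mul_le_mul_of_nonneg_right hsum (sub_nonneg.2 hba)

lemma natCast_mul_le_of_mem_range {c T : ℝ} (hc : 0 < c) (hT : 0 ≤ T) {j : ℕ}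
    (hj : j ∈ range (⌊T / c⌋₊ + 1)) : j * c ≤ T :=
  (le_div_iff₀ hc).1 ((Nat.le_floor_iff (by positivity)).1 (Nat.lt_succ_iff.1 (mem_range.1 hj)))

lemma lt_floor_div_add_one_mul {c : ℝ} (hc : 0 < c) (T : ℝ) : T < (⌊T / c⌋₊ + 1) * c :=
  (div_lt_iff₀ hc).1 (Nat.lt_floor_add_one _)

lemma pow_succ_le_sum_mul_pow {c T : ℝ} (hc : 0 < c) (hT : 0 ≤ T) (k : ℕ) :
    T ^ (k + 1) ≤ ∑ j ∈ range (⌊T / c⌋₊ + 1), (k + 1) * c * (T - j * c) ^ k := by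
  set b : ℕ → ℝ := fun j => max (T - j * c) 0 with hb
  have htel : ∑ j ∈ range (⌊T / c⌋₊ + 1), (b j ^ (k + 1) - b (j + 1) ^ (k + 1)) = T ^ (k + 1) := by
    have hlast : b (⌊T / c⌋₊ + 1) = 0 := by
      have := lt_floor_div_add_one_mul hc T
      simp only [hb]; push_cast; exact max_eq_right (by linarith)
    rw [sum_range_sub', hlast]
    simp [hb, hT, zero_pow (Nat.succ_ne_zero k)]
  rw [← htel]
  refine sum_le_sum fun j hj => ?_
  have hjT := natCast_mul_le_of_mem_range hc hT hj
  have hbj0 : 0 ≤ T - j * c := by linarith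
  have hbj : b j = T - j * c := max_eq_left hbj0
  have hnext : T - j * c - c ≤ b (j + 1) := by
    simp only [hb]; push_cast; exact (le_of_eq (by ring)).trans (le_max_left _ _)
  have hle : b (j + 1) ≤ b j := by
    rw [hbj]; exact max_le (by push_cast; linarith) hbj0
  calc b j ^ (k + 1) - b (j + 1) ^ (k + 1)
      ≤ (k + 1) * (b j - b (j + 1)) * b j ^ k :=
        pow_succ_sub_pow_succ_le (le_max_right _ _) hle k
    _ ≤ (k + 1) * c * (T - j * c) ^ k := by
        rw [hbj]
        gcongr
        linarith

lemma sum_mul_pow_le_pow_succ {c T Θ : ℝ} (hc : 0 < c) (hT : 0 ≤ T) (hΘ : 0 ≤ Θ) (k : ℕ) :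
    ∑ j ∈ range (⌊T / c⌋₊ + 1), (k + 1) * c * (T - j * c + Θ) ^ k ≤ (T + Θ + c) ^ (k + 1) := by
  have hlast := natCast_mul_le_of_mem_range hc hT (self_mem_range_succ ⌊T / c⌋₊)
  calc ∑ j ∈ range (⌊T / c⌋₊ + 1), (k + 1) * c * (T - j * c + Θ) ^ k
      ≤ ∑ j ∈ range (⌊T / c⌋₊ + 1),
          ((T + Θ + c - j * c) ^ (k + 1) - (T + Θ + c - ((j + 1 : ℕ) : ℝ) * c) ^ (k + 1)) := by
        refine sum_le_sum fun j hj => ?_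
        have hjT := natCast_mul_le_of_mem_range hc hT hj
        have h := mul_pow_le_pow_succ_sub_pow_succ (a := T - j * c + Θ + c) (b := T - j * c + Θ)
          (by linarith) (by linarith) k
        rw [add_sub_cancel_left] at h
        refine h.trans_eq ?_
        push_cast
        ring
    _ = (T + Θ + c - (0 : ℕ) * c) ^ (k + 1) - (T + Θ + c - (⌊T / c⌋₊ + 1 : ℕ) * c) ^ (k + 1) :=
        sum_range_sub' (fun j : ℕ => (T + Θ + c - j * c) ^ (k + 1)) _
    _ ≤ (T + Θ + c) ^ (k + 1) := by
        rw [Nat.cast_zero, zero_mul, sub_zero, sub_le_self_iff]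
        exact pow_nonneg (by push_cast; linarith) _

noncomputable def factoredNumbersLogLE (s : Finset ℕ) (T : ℝ) : Finset ℕ :=
  {n ∈ range (⌊exp T⌋₊ + 1) | n ∈ Nat.factoredNumbers s ∧ log n ≤ T}

lemma mem_factoredNumbersLogLE {s : Finset ℕ} {T : ℝ} {n : ℕ} :
    n ∈ factoredNumbersLogLE s T ↔ n ∈ Nat.factoredNumbers s ∧ log n ≤ T := by
  refine ⟨fun h => (mem_filter.1 h).2, fun h => mem_filter.2 ⟨?_, h⟩⟩
  have hn : (0 : ℝ) < n := by exact_mod_cast Nat.pos_of_ne_zero h.1.1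
  have : (n : ℝ) ≤ exp T := by rw [← exp_log hn]; exact exp_le_exp.2 h.2
  exact mem_range.2 (Nat.lt_succ_of_le (Nat.le_floor this))

lemma factoredNumbersLogLE_empty {T : ℝ} (hT : 0 ≤ T) : factoredNumbersLogLE ∅ T = {1} := by
  ext n
  simp only [mem_factoredNumbersLogLE, Nat.factoredNumbers_empty, Set.mem_singleton_iff,
    mem_singleton, and_iff_left_iff_imp]
  rintro rfl
  simpa using hT

lemma log_natCast_pow_mul {p m : ℕ} (hp : p ≠ 0) (hm : m ≠ 0) (j : ℕ) :
    log ((p ^ j * m : ℕ) : ℝ) = j * log p + log m := by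
  push_cast
  rw [log_mul (by positivity) (by exact_mod_cast hm), log_pow]

lemma card_factoredNumbersLogLE_insert {s : Finset ℕ} {p : ℕ} (hp : p.Prime) (hps : p ∉ s)
    (T : ℝ) :
    #(factoredNumbersLogLE (insert p s) T) =
      ∑ j ∈ range (⌊T / log p⌋₊ + 1), #(factoredNumbersLogLE s (T - j * log p)) := by
  have hc : 0 < log p := log_pos (by exact_mod_cast hp.one_lt)
  let e := Nat.equivProdNatFactoredNumbers hp hps
  rw [← card_sigma]
  refine (card_bij (fun x _ => p ^ x.1 * x.2) ?_ ?_ ?_).symm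
  · rintro ⟨j, m⟩ h
    simp only [mem_sigma, mem_factoredNumbersLogLE] at h ⊢
    refine ⟨Nat.pow_mul_mem_factoredNumbers hp j h.2.1, ?_⟩
    rw [log_natCast_pow_mul hp.ne_zero h.2.1.1]
    linarith
  · rintro ⟨j, m⟩ h ⟨j', m'⟩ h' heq
    simp only [mem_sigma, mem_factoredNumbersLogLE] at h h'
    have := e.injective (a₁ := (j, ⟨m, h.2.1⟩)) (a₂ := (j', ⟨m', h'.2.1⟩)) (Subtype.ext heq)
    simp only [Prod.mk.injEq, Subtype.mk.injEq] at this
    obtain ⟨rfl, rfl⟩ := this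
    rfl
  · intro n hn
    rw [mem_factoredNumbersLogLE] at hn
    obtain ⟨⟨j, m, hm⟩, he⟩ := e.surjective ⟨n, hn.1⟩
    have hn' : p ^ j * m = n := congrArg Subtype.val he
    have hlog := hn.2
    rw [← hn', log_natCast_pow_mul hp.ne_zero hm.1] at hlog
    have hj : (j : ℝ) ≤ T / log p := by
      rw [le_div_iff₀ hc]; linarith [log_natCast_nonneg m]
    refine ⟨⟨j, m⟩, ?_, hn'⟩
    simp only [mem_sigma, mem_range, mem_factoredNumbersLogLE]
    exact ⟨Nat.lt_succ_of_le (Nat.le_floor hj), hm, by linarith⟩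

lemma factorial_card_insert_mul_prod_log {s : Finset ℕ} {p : ℕ} (hps : p ∉ s) :
    ((#(insert p s))! : ℝ) * ∏ q ∈ insert p s, log q
      = (#s + 1) * log p * ((#s)! * ∏ q ∈ s, log q) := by
  rw [card_insert_of_notMem hps, prod_insert hps, Nat.factorial_succ]
  push_cast
  ring

theorem pow_card_le_mul_card_factoredNumbersLogLE {s : Finset ℕ} (hs : ∀ p ∈ s, p.Prime)
    {T : ℝ} (hT : 0 ≤ T) :
    T ^ #s ≤ (#s)! * (∏ p ∈ s, log p) * #(factoredNumbersLogLE s T) := by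
  induction s using Finset.induction_on generalizing T with
  | empty => simp [factoredNumbersLogLE_empty hT]
  | insert p s hps ih =>
    have hp := hs p (mem_insert_self p s)
    have hc : 0 < log p := log_pos (by exact_mod_cast hp.one_lt)
    rw [factorial_card_insert_mul_prod_log hps, card_factoredNumbersLogLE_insert hp hps,
      Nat.cast_sum, mul_sum, card_insert_of_notMem hps]
    refine (pow_succ_le_sum_mul_pow hc hT _).trans (sum_le_sum fun j hj => ?_)
    have hjT := natCast_mul_le_of_mem_range hc hT hj
    have := ih (fun q hq => hs q (mem_insert_of_mem hq)) (T := T - j * log p) (by linarith)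
    have hk : 0 ≤ ((#s : ℝ) + 1) * log p := by positivity
    exact (mul_le_mul_of_nonneg_left this hk).trans_eq (by ring)

theorem mul_card_factoredNumbersLogLE_le {s : Finset ℕ} (hs : ∀ p ∈ s, p.Prime)
    {T : ℝ} (hT : 0 ≤ T) :
    (#s)! * (∏ p ∈ s, log p) * #(factoredNumbersLogLE s T) ≤ (T + ∑ p ∈ s, log p) ^ #s := by
  induction s using Finset.induction_on generalizing T with
  | empty => simp [factoredNumbersLogLE_empty hT]
  | insert p s hps ih =>
    have hp := hs p (mem_insert_self p s)
    have hc : 0 < log p := log_pos (by exact_mod_cast hp.one_lt)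
    have hΘ : 0 ≤ ∑ q ∈ s, log q := sum_nonneg fun q _ => log_natCast_nonneg q
    rw [factorial_card_insert_mul_prod_log hps, card_factoredNumbersLogLE_insert hp hps,
      Nat.cast_sum, mul_sum, card_insert_of_notMem hps, sum_insert hps]
    refine (sum_le_sum fun j hj => ?_).trans
      ((sum_mul_pow_le_pow_succ hc hT hΘ _).trans_eq (by ring))
    have hjT := natCast_mul_le_of_mem_range hc hT hj
    have := ih (fun q hq => hs q (mem_insert_of_mem hq)) (T := T - j * log p) (by linarith)
    have hk : 0 ≤ ((#s : ℝ) + 1) * log p := by positivity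
    exact (mul_le_mul_of_nonneg_left this hk).trans_eq' (by ring)

theorem pow_sub_le_mul_card_sdiff {s : Finset ℕ} (hs : ∀ p ∈ s, p.Prime) {T T' : ℝ}
    (hT : 0 ≤ T) (hT' : 0 ≤ T') :
    T ^ #s - (T' + ∑ p ∈ s, log p) ^ #s ≤
      (#s)! * (∏ p ∈ s, log p) * #(factoredNumbersLogLE s T \ factoredNumbersLogLE s T') := by
  have hD : 0 ≤ ((#s)! : ℝ) * ∏ p ∈ s, log p :=
    mul_nonneg (Nat.cast_nonneg _) (prod_nonneg fun p _ => log_natCast_nonneg p)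
  have hcard : (#(factoredNumbersLogLE s T) : ℝ) ≤
      #(factoredNumbersLogLE s T \ factoredNumbersLogLE s T') + #(factoredNumbersLogLE s T') := by
    exact_mod_cast card_le_card_sdiff_add_card
  have := mul_le_mul_of_nonneg_left hcard hD
  linarith [pow_card_le_mul_card_factoredNumbersLogLE hs hT,
    mul_card_factoredNumbersLogLE_le hs hT']

lemma image_nth_prime_range_primeCounting (n : ℕ) :
    (range (Nat.primeCounting n)).image (Nat.nth Nat.Prime) = Nat.primesLE n := by
  ext p
  simp only [mem_image, mem_range, Nat.mem_primesLE]
  constructor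
  · rintro ⟨i, hi, rfl⟩
    exact ⟨Nat.lt_succ_iff.1 (Nat.nth_lt_of_lt_count hi), Nat.prime_nth_prime i⟩
  · rintro ⟨hpn, hp⟩
    exact ⟨Nat.count Nat.Prime p, Nat.count_strict_mono hp (Nat.lt_succ_of_le hpn),
      Nat.nth_count hp⟩

lemma prod_range_primeCounting_succ_mul (n : ℕ) (f : ℕ → ℝ) :
    ∏ i ∈ range (Nat.primeCounting n), ((i : ℝ) + 1) * f (Nat.nth Nat.Prime i) =
      (Nat.primeCounting n)! * ∏ p ∈ Nat.primesLE n, f p := by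
  rw [prod_mul_distrib, ← image_nth_prime_range_primeCounting,
    prod_image fun i _ j _ h => Nat.nth_injective Nat.infinite_setOfPred_prime h]
  congr 1
  exact_mod_cast prod_range_add_one_eq_factorial _

lemma maxPrimeFactor_le {n m : ℕ} (hm : 1 ≤ m) (h : ∀ p ∈ n.primeFactors, p ≤ m) :
    maxPrimeFactor n ≤ m :=
  max_le hm (Finset.sup_le h)

lemma factoredNumbersLogLE_sdiff_subset {X Y : ℝ} (hX : 0 < X) {m : ℕ} (hm : 1 ≤ m)
    (hmY : (m : ℝ) ≤ Y) :
    factoredNumbersLogLE (Nat.primesLE m) (log X) \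
        factoredNumbersLogLE (Nat.primesLE m) (log X / 2) ⊆
      (Icc 1 ⌊X⌋₊).filter fun n : ℕ => √X < n ∧ (maxPrimeFactor n : ℝ) ≤ Y := by
  intro n hn
  simp only [mem_sdiff, mem_factoredNumbersLogLE, not_and, not_le] at hn
  obtain ⟨⟨hfac, hlog⟩, hbig⟩ := hn
  have hn0 : (0 : ℝ) < n := by exact_mod_cast Nat.pos_of_ne_zero hfac.1
  rw [log_le_log_iff hn0 hX] at hlog
  have hsqrt : √X < n := by
    rw [← log_lt_log_iff (sqrt_pos.2 hX) hn0, log_sqrt hX.le]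
    exact hbig hfac
  refine mem_filter.2 ⟨mem_Icc.2 ⟨Nat.pos_of_ne_zero hfac.1, Nat.le_floor hlog⟩, hsqrt, ?_⟩
  refine le_trans ?_ hmY
  exact_mod_cast maxPrimeFactor_le hm fun p hp =>
    (Nat.mem_primesLE.1 (Nat.primeFactors_subset_of_mem_factoredNumbers hfac hp)).1

lemma add_pow_le_half_pow {L Θ : ℝ} (hL : 0 ≤ L) (hΘ : 0 ≤ Θ) (hΘL : Θ ≤ L / 5) {k : ℕ}
    (hk : 2 ≤ k) : (L / 2 + Θ) ^ k ≤ L ^ k / 2 :=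
  calc (L / 2 + Θ) ^ k ≤ (7 / 10 * L) ^ k := by gcongr; linarith
    _ = (7 / 10) ^ k * L ^ k := mul_pow _ _ _
    _ ≤ (7 / 10) ^ 2 * L ^ k :=
        mul_le_mul_of_nonneg_right (pow_le_pow_of_le_one (by norm_num) (by norm_num) hk)
          (pow_nonneg hL k)
    _ ≤ L ^ k / 2 := by nlinarith [pow_nonneg hL k]

lemma theta_le_div_five {x A : ℝ} (hx : 0 ≤ x) (hxA : x ≤ A) (hA : 3 ≤ A) :
    Chebyshev.theta x ≤ A ^ 4 / 5 := by
  have hlog4 : log 4 ≤ 3 := by linarith [log_le_sub_one_of_pos (by norm_num : (0 : ℝ) < 4)]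
  have hA3 : 3 ^ 3 ≤ A ^ 3 := by gcongr
  calc Chebyshev.theta x ≤ log 4 * x := Chebyshev.theta_le_log4_mul_x hx
    _ ≤ 3 * A := by gcongr
    _ ≤ A ^ 4 / 5 := by nlinarith

theorem stmt12 :
    ∃ c₁₂ : ℝ, 0 < c₁₂ ∧
      ∀ y : ℝ → ℝ,
        (∀ a b : ℝ, 0 < a → a ≤ b → y a ≤ y b) →
        (∀ x : ℝ, 0 < x → 3 ≤ y x) →
        ∀ X : ℝ, c₁₂ < X → y (Real.sqrt X) ≤ Real.log X ^ ((1 : ℝ) / 4) →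
          (Real.log X ^ primePi (y (Real.sqrt X)) /
              (2 * ∏ i ∈ Finset.range (primePi (y (Real.sqrt X))),
                ((i : ℝ) + 1) * Real.log (Nat.nth Nat.Prime i))) ≤
            (((Finset.Icc 1 ⌊X⌋₊).filter fun n : ℕ =>
              Real.sqrt X < (n : ℝ) ∧ (maxPrimeFactor n : ℝ) ≤ y (Real.sqrt X)).card : ℝ) := by
  refine ⟨1, one_pos, fun y _ hy3 X hX hYA => ?_⟩
  have hX0 : 0 < X := one_pos.trans hX
  have hL : 0 < log X := log_pos hX
  have hY3 : 3 ≤ y √X := hy3 _ (sqrt_pos.2 hX0)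
  have hA4 : (log X ^ ((1 : ℝ) / 4)) ^ 4 = log X := by
    rw [← rpow_natCast, ← rpow_mul hL.le]; norm_num
  rw [primePi]
  set m := ⌊y √X⌋₊
  have hm3 : 3 ≤ m := Nat.le_floor (by exact_mod_cast hY3)
  have hmY : (m : ℝ) ≤ y √X := Nat.floor_le (by linarith)
  have hprimes : ∀ p ∈ Nat.primesLE m, p.Prime := fun p hp => (Nat.mem_primesLE.1 hp).2
  have hr : 2 ≤ #(Nat.primesLE m) := by
    rw [Nat.primesLE_card_eq_primeCounting]
    exact (Nat.monotone_primeCounting hm3).trans' (by decide)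
  have hθ : ∑ p ∈ Nat.primesLE m, log p ≤ log X / 5 := by
    rw [← Chebyshev.theta_eq_sum_primesLE, ← hA4]
    exact theta_le_div_five (by linarith) hYA (hY3.trans hYA)
  have hD : 0 < ((#(Nat.primesLE m))! : ℝ) * ∏ p ∈ Nat.primesLE m, log p :=
    mul_pos (by positivity) (prod_pos fun p hp => log_pos (by exact_mod_cast (hprimes p hp).one_lt))
  have hwindow := pow_sub_le_mul_card_sdiff hprimes hL.le (by positivity : 0 ≤ log X / 2)
  have hhalf := add_pow_le_half_pow hL.le (sum_nonneg fun p _ => log_natCast_nonneg p) hθ hr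
  have hsub : (#(factoredNumbersLogLE (Nat.primesLE m) (log X) \
      factoredNumbersLogLE (Nat.primesLE m) (log X / 2)) : ℝ) ≤ _ :=
    Nat.cast_le.2 (card_le_card (factoredNumbersLogLE_sdiff_subset hX0 (by omega) hmY))
  rw [Nat.primesLE_card_eq_primeCounting] at hwindow hhalf hD
  rw [prod_range_primeCounting_succ_mul m (fun p => log p), div_le_iff₀ (by positivity)]
  linarith [mul_le_mul_of_nonneg_left hsub hD.le]
end
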